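/- Let q ∈ (0,1), β < 1, z ∈ ℂ with 0 < |z| < 1, and τ with q·υ(τ) = β·υ(z) where υ(w) = w + w⁻¹. Then the monic orthogonal polynomials p_n^{(q,β)} defined by p_{-1} = 0, p_0 = 1, p_{n+1}(x) = x p_n(x) - γ̃_{n-1}γ̃_n p_{n-1}(x) with γ̃_n = (1 - q^{n+1})/(1 - βq^n), satisfy the explicit formula p_n^{(q,β)}(υ(z)) = ((q;q)_n/(β;q)_n) · ∑_{k=0}^n [(qτz⁻¹;q)_k (qτ⁻¹z;q)_{n-k} / ((q;q)_k (q;q)_{n-k})] · z^{2k-n}. -/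

import Mathlib

/-- The finite q-Pochhammer symbol `(a;Q)_n = ∏_{j=0}^{n-1} (1 - a Q^j)`. -/
def qPoch (a Q : ℂ) (n : ℕ) : ℂ := ∏ j ∈ Finset.range n, (1 - a * Q ^ j)

/-!
Put `a = qτ/z` and `b = qz/τ`, so that `ab = q²` and `az + b/z = β(z + z⁻¹)`. The sum on the
right is `z⁻ⁿ` times the `tⁿ`-coefficient of `F(z²t) G(t)`, where `F` and `G` are the series
`∑ (a;q)ₖ/(q;q)ₖ tᵏ` and `∑ (b;q)ₖ/(q;q)ₖ tᵏ` of the `q`-binomial theorem. Each of them solves a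
first-order `q`-difference equation `(1 - t) F(t) = (1 - at) F(qt)`, so their product solves a
second-order one, whose coefficients form a three-term recurrence. After the normalisation
`(q;q)ₙ/(β;q)ₙ` this is the recurrence defining `pₙ`, with the same initial values.
-/

open PowerSeries

section QDifference

variable {R : Type*} [CommRing R]

theorem PowerSeries.rescale_C (w a : R) : rescale w (C a) = C a := by
  ext (_ | k) <;> simp [coeff_C]

theorem one_sub_X_mul_mk_eq_of_recurrence {A : ℕ → R} {a Q : R}
    (hA : ∀ k, (1 - Q ^ (k + 1)) * A (k + 1) = (1 - a * Q ^ k) * A k) :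
    (1 - X) * mk A = (1 - C a * X) * rescale Q (mk A) := by
  ext (_ | k) <;>
  simp only [sub_mul, one_mul, map_sub, coeff_zero_X_mul, coeff_succ_X_mul, mul_assoc,
      coeff_C_mul, coeff_rescale, coeff_mk]
  · simp
  · linear_combination hA k

theorem rescale_mul_qDifference {f g : R⟦X⟧} {a b Q : R} (w : R)
    (hf : (1 - X) * f = (1 - C a * X) * rescale Q f)
    (hg : (1 - X) * g = (1 - C b * X) * rescale Q g) :
    (1 - C w * X) * (1 - X) * (rescale w f * g) =
      (1 - C (a * w) * X) * (1 - C b * X) * rescale Q (rescale w f * g) := by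
  have hfw : (1 - C w * X) * rescale w f = (1 - C (a * w) * X) * rescale Q (rescale w f) := by
    have := congrArg (rescale w) hf
    simp only [map_mul, map_sub, map_one, rescale_X, rescale_rescale, rescale_C] at this
    rw [this, rescale_rescale, mul_comm Q w, map_mul C]
    ring
  rw [map_mul (rescale Q)]
  linear_combination (1 - X) * g * hfw + (1 - C (a * w) * X) * rescale Q (rescale w f) * hg

theorem coeff_add_two_one_sub_C_mul_X_mul (c d : R) (f : R⟦X⟧) (n : ℕ) :
    coeff (n + 2) ((1 - C c * X) * (1 - C d * X) * f) =
      coeff (n + 2) f - (c + d) * coeff (n + 1) f + c * d * coeff n f := by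
  have : (1 - C c * X) * (1 - C d * X) * f =
      f - C (c + d) * (X * f) + C (c * d) * (X * (X * f)) := by
    simp only [map_add, map_mul]; ring
  rw [this, map_add, map_sub]
  simp only [coeff_C_mul, coeff_succ_X_mul]

theorem coeff_rescale_mul_qDifference {f g : R⟦X⟧} {a b Q : R} (w : R)
    (hf : (1 - X) * f = (1 - C a * X) * rescale Q f)
    (hg : (1 - X) * g = (1 - C b * X) * rescale Q g) (n : ℕ) :
    (1 - Q ^ (n + 2)) * coeff (n + 2) (rescale w f * g)
        + w * (1 - a * b * Q ^ n) * coeff n (rescale w f * g) =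
      (w + 1 - (a * w + b) * Q ^ (n + 1)) * coeff (n + 1) (rescale w f * g) := by
  have h := congrArg (coeff (n + 2)) (rescale_mul_qDifference w hf hg)
  rw [show (1 - X : R⟦X⟧) = 1 - C 1 * X by simp, coeff_add_two_one_sub_C_mul_X_mul,
    coeff_add_two_one_sub_C_mul_X_mul] at h
  simp only [coeff_rescale] at h
  linear_combination h

end QDifference

theorem qPoch_zero (a Q : ℂ) : qPoch a Q 0 = 1 := Finset.prod_range_zero _

theorem qPoch_succ (a Q : ℂ) (n : ℕ) : qPoch a Q (n + 1) = qPoch a Q n * (1 - a * Q ^ n) :=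
  Finset.prod_range_succ _ _

theorem qPoch_ofReal_ne_zero {a q : ℝ} (ha : a < 1) (hq0 : 0 ≤ q) (hq1 : q ≤ 1) (n : ℕ) :
    qPoch a q n ≠ 0 := by
  refine Finset.prod_ne_zero_iff.2 fun j _ => ?_
  have hpos : 0 < 1 - a * q ^ j := by
    rcases le_or_gt a 0 with h | h
    · nlinarith [pow_nonneg hq0 j]
    · nlinarith [pow_le_one₀ hq0 hq1 (n := j)]
  exact_mod_cast hpos.ne'

theorem one_sub_mul_pow_ne_zero_of_qPoch_ne_zero {a Q : ℂ} (h : ∀ k, qPoch a Q k ≠ 0) (n : ℕ) :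
    1 - a * Q ^ n ≠ 0 :=
  right_ne_zero_of_mul (qPoch_succ a Q n ▸ h (n + 1))

noncomputable def qBinomialSeries (a Q : ℂ) : ℂ⟦X⟧ :=
  PowerSeries.mk fun k => qPoch a Q k / qPoch Q Q k

theorem qBinomialSeries_qDifference {a Q : ℂ} (hQ : ∀ k, qPoch Q Q k ≠ 0) :
    (1 - X) * qBinomialSeries a Q = (1 - C a * X) * rescale Q (qBinomialSeries a Q) := by
  refine one_sub_X_mul_mk_eq_of_recurrence fun k => ?_
  have hk := one_sub_mul_pow_ne_zero_of_qPoch_ne_zero hQ k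
  rw [qPoch_succ, qPoch_succ, pow_succ']
  field_simp

noncomputable def qLaurentSum (a b Q z : ℂ) (n : ℕ) : ℂ :=
  ∑ k ∈ Finset.range (n + 1),
    qPoch a Q k * qPoch b Q (n - k) / (qPoch Q Q k * qPoch Q Q (n - k)) *
      z ^ (2 * (k : ℤ) - (n : ℤ))

theorem qLaurentSum_eq_coeff (a b Q : ℂ) {z : ℂ} (hz : z ≠ 0) (n : ℕ) :
    qLaurentSum a b Q z n =
      coeff n (rescale (z ^ 2) (qBinomialSeries a Q) * qBinomialSeries b Q) / z ^ n := by
  rw [coeff_mul, Finset.Nat.sum_antidiagonal_eq_sum_range_succ_mk, Finset.sum_div]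
  refine Finset.sum_congr rfl fun k _ => ?_
  rw [show 2 * (k : ℤ) - n = ((2 * k : ℕ) : ℤ) - (n : ℕ) by push_cast; ring, zpow_sub₀ hz,
    zpow_natCast, zpow_natCast]
  simp only [qBinomialSeries, coeff_rescale, coeff_mk]
  field_simp
  ring

theorem qLaurentSum_zero (a b Q z : ℂ) : qLaurentSum a b Q z 0 = 1 := by
  simp [qLaurentSum, qPoch_zero]

theorem qLaurentSum_one (a b Q z : ℂ) (hQ : 1 - Q ≠ 0) :
    (1 - Q) * qLaurentSum a b Q z 1 = (1 - a) * z + (1 - b) * z⁻¹ := by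
  have hS : qLaurentSum a b Q z 1 = (1 - b) / (1 - Q) * z⁻¹ + (1 - a) / (1 - Q) * z := by
    simp [qLaurentSum, Finset.sum_range_succ, qPoch_succ, qPoch_zero]
  rw [hS]
  field_simp
  ring

theorem qLaurentSum_recurrence {a b Q β z : ℂ} (hz : z ≠ 0) (hQ : ∀ k, qPoch Q Q k ≠ 0)
    (hab : a * b = Q ^ 2) (hβ : a * z + b * z⁻¹ = β * (z + z⁻¹)) (n : ℕ) :
    (1 - β * Q ^ (n + 1)) * (z + z⁻¹) * qLaurentSum a b Q z (n + 1) =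
      (1 - Q ^ (n + 2)) * (qLaurentSum a b Q z (n + 2) + qLaurentSum a b Q z n) := by
  have h := coeff_rescale_mul_qDifference (z ^ 2) (qBinomialSeries_qDifference (a := a) hQ)
    (qBinomialSeries_qDifference (a := b) hQ) n
  simp only [qLaurentSum_eq_coeff _ _ _ hz]
  have hβ' : a * z ^ 2 + b = β * (z ^ 2 + 1) := by
    field_simp at hβ; linear_combination hβ
  rw [hab, hβ'] at h
  field_simp
  linear_combination (-(z ^ n * z ^ (n + 2))) * h

theorem qPoch_div_mul_recurrence {Q β x : ℂ} {S : ℕ → ℂ} (hβ : ∀ k, qPoch β Q k ≠ 0)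
    (hS : ∀ n, (1 - β * Q ^ (n + 1)) * x * S (n + 1) = (1 - Q ^ (n + 2)) * (S (n + 2) + S n))
    (n : ℕ) :
    qPoch Q Q (n + 2) / qPoch β Q (n + 2) * S (n + 2) =
      x * (qPoch Q Q (n + 1) / qPoch β Q (n + 1) * S (n + 1)) -
        (1 - Q ^ (n + 1)) / (1 - β * Q ^ n) * ((1 - Q ^ (n + 1 + 1)) / (1 - β * Q ^ (n + 1))) *
          (qPoch Q Q n / qPoch β Q n * S n) := by
  have hc : ∀ m, qPoch Q Q (m + 1) / qPoch β Q (m + 1) =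
      qPoch Q Q m / qPoch β Q m * ((1 - Q ^ (m + 1)) / (1 - β * Q ^ m)) := fun m => by
    rw [qPoch_succ, qPoch_succ, pow_succ', div_mul_div_comm]
  have hx : x * S (n + 1) = (1 - Q ^ (n + 2)) / (1 - β * Q ^ (n + 1)) * (S (n + 2) + S n) := by
    rw [div_mul_eq_mul_div, eq_div_iff (one_sub_mul_pow_ne_zero_of_qPoch_ne_zero hβ (n + 1))]
    linear_combination hS n
  rw [hc (n + 1), hc n]
  linear_combination (-(qPoch Q Q n / qPoch β Q n * ((1 - Q ^ (n + 1)) / (1 - β * Q ^ n)))) * hx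

theorem stmt_12_general (q β : ℝ) (hq : q ∈ Set.Ioo (0 : ℝ) 1) (hβ : β < 1)
    (z τ : ℂ) (hz0 : 0 < ‖z‖) (hτ : τ ≠ 0)
    (hrel : (q : ℂ) * (τ + τ⁻¹) = (β : ℂ) * (z + z⁻¹))
    (p : ℕ → ℂ → ℂ)
    (hp0 : ∀ x, p 0 x = 1) (hp1 : ∀ x, p 1 x = x)
    (hprec : ∀ n : ℕ, 1 ≤ n → ∀ x : ℂ,
      p (n + 1) x = x * p n x -
        ((1 - (q : ℂ) ^ n) / (1 - (β : ℂ) * (q : ℂ) ^ (n - 1))) *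
        ((1 - (q : ℂ) ^ (n + 1)) / (1 - (β : ℂ) * (q : ℂ) ^ n)) * p (n - 1) x) :
    ∀ n : ℕ, p n (z + z⁻¹) =
      (qPoch (q : ℂ) (q : ℂ) n / qPoch (β : ℂ) (q : ℂ) n) *
        ∑ k ∈ Finset.range (n + 1),
          qPoch ((q : ℂ) * τ * z⁻¹) (q : ℂ) k * qPoch ((q : ℂ) * τ⁻¹ * z) (q : ℂ) (n - k) /
            (qPoch (q : ℂ) (q : ℂ) k * qPoch (q : ℂ) (q : ℂ) (n - k)) *
          z ^ (2 * (k : ℤ) - (n : ℤ)) := by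
  have hz : z ≠ 0 := norm_pos_iff.mp hz0
  have hQ : ∀ k, qPoch q q k ≠ 0 := qPoch_ofReal_ne_zero hq.2 hq.1.le hq.2.le
  have hB : ∀ k, qPoch β q k ≠ 0 := qPoch_ofReal_ne_zero hβ hq.1.le hq.2.le
  have hab : q * τ * z⁻¹ * (q * τ⁻¹ * z) = (q : ℂ) ^ 2 := by field_simp
  have hsym : q * τ * z⁻¹ * z + q * τ⁻¹ * z * z⁻¹ = β * (z + z⁻¹) := by
    rw [← hrel]; field_simp
  have hS := qLaurentSum_recurrence hz hQ hab hsym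
  intro n
  change p n _ = _ * qLaurentSum _ _ _ z n
  set S := qLaurentSum (q * τ * z⁻¹) (q * τ⁻¹ * z) q z
  induction n using Nat.twoStepInduction with
  | zero => simp [hp0, qPoch_zero, S, qLaurentSum_zero]
  | one =>
    have h1 := qLaurentSum_one (q * τ * z⁻¹) (q * τ⁻¹ * z) q z
      (by simpa [qPoch] using hQ 1)
    have hβ1 : (1 : ℂ) - β ≠ 0 := by simpa using one_sub_mul_pow_ne_zero_of_qPoch_ne_zero hB 0
    simp only [hp1, qPoch_succ, qPoch_zero, one_mul, pow_zero, mul_one]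
    rw [div_mul_eq_mul_div, eq_div_iff hβ1]
    linear_combination -h1 + hsym
  | more n ih0 ih1 =>
    rw [hprec (n + 1) le_add_self, Nat.add_sub_cancel, ih0, ih1]
    exact (qPoch_div_mul_recurrence hB hS n).symm

theorem stmt_12 (q β : ℝ) (hq : q ∈ Set.Ioo (0 : ℝ) 1) (hβ : β < 1)
    (z τ : ℂ) (hz0 : 0 < ‖z‖) (hz1 : ‖z‖ < 1) (hτ : τ ≠ 0)
    (hrel : (q : ℂ) * (τ + τ⁻¹) = (β : ℂ) * (z + z⁻¹))
    (p : ℕ → ℂ → ℂ)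
    (hp0 : ∀ x, p 0 x = 1) (hp1 : ∀ x, p 1 x = x)
    (hprec : ∀ n : ℕ, 1 ≤ n → ∀ x : ℂ,
      p (n + 1) x = x * p n x -
        ((1 - (q : ℂ) ^ n) / (1 - (β : ℂ) * (q : ℂ) ^ (n - 1))) *
        ((1 - (q : ℂ) ^ (n + 1)) / (1 - (β : ℂ) * (q : ℂ) ^ n)) * p (n - 1) x) :
    ∀ n : ℕ, p n (z + z⁻¹) =
      (qPoch (q : ℂ) (q : ℂ) n / qPoch (β : ℂ) (q : ℂ) n) *
        ∑ k ∈ Finset.range (n + 1),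
          qPoch ((q : ℂ) * τ * z⁻¹) (q : ℂ) k * qPoch ((q : ℂ) * τ⁻¹ * z) (q : ℂ) (n - k) /
            (qPoch (q : ℂ) (q : ℂ) k * qPoch (q : ℂ) (q : ℂ) (n - k)) *
          z ^ (2 * (k : ℤ) - (n : ℤ)) :=
  stmt_12_general q β hq hβ z τ hz0 hτ hrel p hp0 hp1 hprec
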